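/- arXiv:2205.02660 — 2 statements merged into one kernel-verified Lean document; each statement's English description precedes it below -/
import Mathlib

section
/- Let I be a fulfilling model of the ontology ⟨{A' ⊑ C ⊓ D, C' ⊑ C, C' ⊓ D ⊑ ⊥, D' ⊑ D, D' ⊓ C ⊑ ⊥}, {A'(a), C'(c), D'(d), C(c), C(a), D(d), D(a)}⟩ (the backward translation of v_C {PO} v_D). Then C^I ∩ D^I ≠ ∅, C^I ⊄ D^I, and D^I ⊄ C^I; i.e., PO holds between C^I and D^I. -/
def RCC5.PO {α : Type*} (X Y : Set α) : Prop := (X ∩ Y).Nonempty ∧ ¬ X ⊆ Y ∧ ¬ Y ⊆ X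

theorem po_backward_model_flattening {Δ : Type*} (A' C' D' C D : Set Δ) (a c d : Δ)
    (hA' : A'.Nonempty) (hC' : C'.Nonempty) (hD' : D'.Nonempty)
    (hC : C.Nonempty) (hD : D.Nonempty)
    (h1 : A' ⊆ C ∩ D) (h2 : C' ⊆ C) (h3 : C' ∩ D = ∅)
    (h4 : D' ⊆ D) (h5 : D' ∩ C = ∅)
    (ha : a ∈ A') (hc : c ∈ C') (hd : d ∈ D')
    (hcC : c ∈ C) (haC : a ∈ C) (hdD : d ∈ D) (haD : a ∈ D) :
    RCC5.PO C D := by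
  refine ⟨⟨a, haC, haD⟩, ?_, ?_⟩
  · intro h
    have : c ∈ C' ∩ D := ⟨hc, h hcC⟩
    simp [h3] at this
  · intro h
    have : d ∈ D' ∩ C := ⟨hd, h hdD⟩
    simp [h5] at this
end

section
/- For any scenario constraint form φ ∈ {{EQ}, {DR}, {PP}, {PPi}, {PO}, {PP,EQ}, {PPi,EQ}} between variables v_C and v_D, a pair of nonempty regions satisfies φ if and only if there exists a fulfilling model of the backward-translated ontology τ_◁(v_C φ v_D) whose interpretation of C and D equals those regions. In particular, the backward translation is faithful for scenarios: the solutions of a scenario coincide (via flattening/inflation) with the fulfilling models of its backward translation. -/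
/-- The seven constraint forms allowed in a QCN scenario. -/
inductive Ctr | ceq | cdr | cpp | cppi | cpo | cppeq | cppieq

/-- Set-theoretic satisfaction of a scenario constraint by a pair of regions. -/
def satCtr {Δ : Type*} (X Y : Set Δ) : Ctr → Prop
  | .ceq => X = Y
  | .cdr => X ∩ Y = ∅
  | .cpp => X ⊂ Y
  | .cppi => Y ⊂ X
  | .cpo => (X ∩ Y).Nonempty ∧ ¬ X ⊆ Y ∧ ¬ Y ⊆ X
  | .cppeq => X ⊆ Y
  | .cppieq => Y ⊆ X

/-- Existence of a fulfilling model of the backward translation `τ_◁(v_C φ v_D)`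
    interpreting `C` as `X` and `D` as `Y` (fresh concept names and individuals
    are quantified existentially). -/
def hasFulfillingBackModel {Δ : Type*} (X Y : Set Δ) : Ctr → Prop
  | .ceq => X = Y
  | .cdr => X ∩ Y = ∅
  | .cppeq => X ⊆ Y
  | .cppieq => Y ⊆ X
  | .cpp => ∃ (D' : Set Δ) (c d : Δ), D'.Nonempty ∧
      X ⊆ Y ∧ D' ⊆ Y ∧ X ∩ D' = ∅ ∧
      d ∈ D' ∧ c ∈ X ∧ d ∈ Y ∧ c ∈ Y
  | .cppi => ∃ (C' : Set Δ) (c d : Δ), C'.Nonempty ∧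
      Y ⊆ X ∧ C' ⊆ X ∧ Y ∩ C' = ∅ ∧
      c ∈ C' ∧ d ∈ Y ∧ c ∈ X ∧ d ∈ X
  | .cpo => ∃ (A' C' D' : Set Δ) (a c d : Δ),
      A'.Nonempty ∧ C'.Nonempty ∧ D'.Nonempty ∧
      A' ⊆ X ∩ Y ∧ C' ⊆ X ∧ C' ∩ Y = ∅ ∧ D' ⊆ Y ∧ D' ∩ X = ∅ ∧
      a ∈ A' ∧ c ∈ X ∧ a ∈ X ∧ d ∈ Y ∧ a ∈ Y ∧ c ∈ C' ∧ d ∈ D'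

theorem backward_translation_faithful {Δ : Type*} (φ : Ctr) (X Y : Set Δ)
    (hX : X.Nonempty) (hY : Y.Nonempty) :
    satCtr X Y φ ↔ hasFulfillingBackModel X Y φ := by
  cases φ with
  | ceq => rfl
  | cdr => rfl
  | cppeq => rfl
  | cppieq => rfl
  | cpp =>
    constructor
    · rintro ⟨hsub, hne⟩
      obtain ⟨d, hdY, hdX⟩ := Set.not_subset.mp hne
      obtain ⟨c, hcX⟩ := hX
      refine ⟨{d}, c, d, ⟨d, rfl⟩, hsub, by simpa using hdY, ?_, rfl, hcX, hdY, hsub hcX⟩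
      ext x; simp only [Set.mem_inter_iff, Set.mem_singleton_iff, Set.mem_empty_iff_false, iff_false, not_and]
      rintro hx rfl; exact hdX hx
    · rintro ⟨D', c, d, _, hsub, _, hdisj, hdD', _, hdY, _⟩
      refine ⟨hsub, fun h => ?_⟩
      have : d ∈ X ∩ D' := ⟨h hdY, hdD'⟩
      rw [hdisj] at this; exact this
  | cppi =>
    constructor
    · rintro ⟨hsub, hne⟩
      obtain ⟨c, hcX, hcY⟩ := Set.not_subset.mp hne
      obtain ⟨d, hdY⟩ := hY
      refine ⟨{c}, c, d, ⟨c, rfl⟩, hsub, by simpa using hcX, ?_, rfl, hdY, hcX, hsub hdY⟩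
      ext x; simp only [Set.mem_inter_iff, Set.mem_singleton_iff, Set.mem_empty_iff_false, iff_false, not_and]
      rintro hx rfl; exact hcY hx
    · rintro ⟨C', c, d, _, hsub, _, hdisj, hcC', _, hcX, _⟩
      refine ⟨hsub, fun h => ?_⟩
      have : c ∈ Y ∩ C' := ⟨h hcX, hcC'⟩
      rw [hdisj] at this; exact this
  | cpo =>
    constructor
    · rintro ⟨⟨a, haX, haY⟩, hXY, hYX⟩
      obtain ⟨c, hcX, hcY⟩ := Set.not_subset.mp hXY
      obtain ⟨d, hdY, hdX⟩ := Set.not_subset.mp hYX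
      refine ⟨{a}, {c}, {d}, a, c, d, ⟨a, rfl⟩, ⟨c, rfl⟩, ⟨d, rfl⟩,
        by simpa using And.intro haX haY, by simpa using hcX, ?_, by simpa using hdY, ?_,
        rfl, hcX, haX, hdY, haY, rfl, rfl⟩
      · ext x; simp only [Set.mem_inter_iff, Set.mem_singleton_iff, Set.mem_empty_iff_false, iff_false, not_and]
        rintro rfl; exact hcY
      · ext x; simp only [Set.mem_inter_iff, Set.mem_singleton_iff, Set.mem_empty_iff_false, iff_false, not_and]
        rintro rfl; exact hdX
    · rintro ⟨A', C', D', a, c, d, _, _, _, _, _, hCdisj, _, hDdisj, _, hcX, haX, hdY, haY, hcC', hdD'⟩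
      refine ⟨⟨a, haX, haY⟩, fun h => ?_, fun h => ?_⟩
      · have : c ∈ C' ∩ Y := ⟨hcC', h hcX⟩
        rw [hCdisj] at this; exact this
      · have : d ∈ D' ∩ X := ⟨hdD', h hdY⟩
        rw [hDdisj] at this; exact this
end
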